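/- Let φ be a CNF formula over the propositional variables X_1, …, X_k. Then there exists a deterministic finite automaton A over the two-letter alphabet {0, 1} such that for every word w = w_1 … w_k ∈ {0, 1}^k of length k: w is a reset word for A if and only if the assignment α_w, defined by α_w(X_j) = true ⟺ w_j = 1, satisfies φ. -/

import Mathlib

/-- The extension `δ*` of a transition function `δ` to words. -/
def deltaStar {Q A : Type*} (δ : Q → A → Q) (q : Q) (w : List A) : Q :=
  w.foldl δ q

/-- A word `w` is a reset word for the automaton with transition function `δ`. -/
def IsResetWord {Q A : Type*} (δ : Q → A → Q) (w : List A) : Prop :=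
  ∃ p : Q, ∀ q : Q, deltaStar δ q w = p

/-- A clause over variables `X_1, …, X_k` is a finite set of literals; the literal
`(j, true)` stands for `X_j`, and `(j, false)` for `¬X_j`. -/
abbrev Clause (k : ℕ) := Finset (Fin k × Bool)

/-- An assignment satisfies a clause if it makes at least one of its literals true. -/
def SatClause {k : ℕ} (α : Fin k → Bool) (C : Clause k) : Prop :=
  ∃ l ∈ C, α l.1 = l.2

/-- An assignment satisfies a CNF formula if it satisfies every clause. -/
def SatCNF {n k : ℕ} (α : Fin k → Bool) (φ : Fin n → Clause k) : Prop :=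
  ∀ i : Fin n, SatClause α (φ i)

/-!
Eppstein's automaton has a sink `none` together with, for every clause `i` and position `j ≤ k`,
a state `some (i, j)` meaning "the letters read so far, placed at positions `0, …, j - 1`, satisfy
no literal of clause `i`". Reading the letter `b` at `(i, j)` falls into the sink if `(j, b)` is a
literal of clause `i` or if `j = k`, and moves on to `(i, j + 1)` otherwise. Since the sink is
absorbing, a word is a reset word iff it sends every state to the sink. A word of length `k` does
so from `(i, j)` with `j > 0` because it runs past position `k`, and from `(i, 0)` iff it hits a
literal of clause `i`, that is, iff the corresponding assignment satisfies clause `i`.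
-/

section ResetWord

variable {Q Q' A : Type*}

@[simp]
lemma deltaStar_nil (δ : Q → A → Q) (q : Q) : deltaStar δ q [] = q := rfl

@[simp]
lemma deltaStar_cons (δ : Q → A → Q) (q : Q) (a : A) (w : List A) :
    deltaStar δ q (a :: w) = deltaStar δ (δ q a) w := rfl

lemma deltaStar_of_absorbing {δ : Q → A → Q} {s : Q} (hs : ∀ a, δ s a = s) (w : List A) :
    deltaStar δ s w = s := by
  induction w with
  | nil => rfl
  | cons a w ih => rw [deltaStar_cons, hs, ih]

lemma isResetWord_iff_of_absorbing {δ : Q → A → Q} {s : Q} (hs : ∀ a, δ s a = s) (w : List A) :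
    IsResetWord δ w ↔ ∀ q, deltaStar δ q w = s := by
  refine ⟨fun ⟨p, hp⟩ q => ?_, fun h => ⟨s, h⟩⟩
  rw [hp, ← hp s, deltaStar_of_absorbing hs]

lemma deltaStar_equiv_conj (e : Q ≃ Q') (δ : Q → A → Q) (q : Q) (w : List A) :
    deltaStar (fun s a => e (δ (e.symm s) a)) (e q) w = e (deltaStar δ q w) := by
  induction w generalizing q with
  | nil => rfl
  | cons a w ih => simp only [deltaStar_cons, Equiv.symm_apply_apply, ih]

lemma isResetWord_equiv_conj_iff (e : Q ≃ Q') (δ : Q → A → Q) (w : List A) :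
    IsResetWord (fun s a => e (δ (e.symm s) a)) w ↔ IsResetWord δ w := by
  constructor
  · rintro ⟨p, hp⟩
    exact ⟨e.symm p, fun q => e.eq_symm_apply.mpr (by rw [← deltaStar_equiv_conj, hp])⟩
  · rintro ⟨p, hp⟩
    exact ⟨e p, fun q => by rw [← e.apply_symm_apply q, deltaStar_equiv_conj, hp]⟩

end ResetWord

lemma satClause_iff_exists_getElem? {k : ℕ} {w : List Bool} (h : w.length = k) (C : Clause k) :
    SatClause (fun j : Fin k => w.get (Fin.cast h.symm j)) C ↔
      ∃ l ∈ C, w[(l.1 : ℕ)]? = some l.2 := by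
  simp [SatClause, h]

namespace Eppstein

variable {n k : ℕ}

abbrev State (n k : ℕ) := Option (Fin n × Fin (k + 1))

def transition (φ : Fin n → Clause k) : State n k → Bool → State n k
  | none, _ => none
  | some (i, j), b =>
    if h : (j : ℕ) < k then
      if (j.castLT h, b) ∈ φ i then none else some (i, (j.castLT h).succ)
    else none

lemma transition_none (φ : Fin n → Clause k) (b : Bool) : transition φ none b = none := rfl

lemma deltaStar_transition_some_eq_none_iff (φ : Fin n → Clause k) (i : Fin n) (j : Fin (k + 1))
    (w : List Bool) :
    deltaStar (transition φ) (some (i, j)) w = none ↔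
      k < j + w.length ∨ ∃ l ∈ φ i, (j : ℕ) ≤ l.1 ∧ w[(l.1 : ℕ) - j]? = some l.2 := by
  induction w generalizing j with
  | nil => simp [j.is_le]
  | cons b w ih =>
    rw [deltaStar_cons, transition]
    split_ifs with hj hlit
    · exact iff_of_true (deltaStar_of_absorbing (transition_none φ) w)
        (.inr ⟨_, hlit, le_rfl, by simp⟩)
    · rw [ih, Fin.val_succ, Fin.val_castLT, List.length_cons]
      refine or_congr (by omega) ⟨fun ⟨l, hl, hjl, hw⟩ => ⟨l, hl, by omega, ?_⟩, ?_⟩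
      · rwa [show (l.1 : ℕ) - j = (l.1 - (j + 1)) + 1 by omega, List.getElem?_cons_succ]
      · rintro ⟨l, hl, hjl, hw⟩
        rcases hjl.eq_or_lt with hjl | hjl
        · rw [← hjl, Nat.sub_self, List.getElem?_cons_zero, Option.some_inj] at hw
          obtain rfl : l = (j.castLT hj, b) := Prod.ext (Fin.ext hjl.symm) hw.symm
          exact absurd hl hlit
        · refine ⟨l, hl, hjl, ?_⟩
          rwa [show (l.1 : ℕ) - j = (l.1 - (j + 1)) + 1 by omega, List.getElem?_cons_succ] at hw
    · exact iff_of_true (deltaStar_of_absorbing (transition_none φ) w) (.inl (by simp; omega))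

theorem isResetWord_transition_iff (φ : Fin n → Clause k) (w : List Bool) (h : w.length = k) :
    IsResetWord (transition φ) w ↔ SatCNF (fun j : Fin k => w.get (Fin.cast h.symm j)) φ := by
  simp only [isResetWord_iff_of_absorbing (transition_none φ), Option.forall, Prod.forall,
    deltaStar_of_absorbing (transition_none φ), true_and, deltaStar_transition_some_eq_none_iff, h,
    SatCNF, satClause_iff_exists_getElem? h]
  refine forall_congr' fun i => ⟨fun hi => ?_, fun hi j => ?_⟩
  · simpa using hi 0
  · rcases Nat.eq_zero_or_pos j with hj | hj
    · simpa [hj] using hi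
    · exact .inl (by omega)

end Eppstein

open Eppstein in
/-- Eppstein's reduction: from a CNF formula `φ` over variables `X_1, …, X_k` one obtains
a DFA over `{0,1}` such that a word `w ∈ {0,1}^k` is a reset word iff the corresponding
assignment (`X_j` is true iff `w_j = 1`) satisfies `φ`. -/
theorem eppstein_reduction (n k : ℕ) (φ : Fin n → Clause k) :
    ∃ (N : ℕ) (δ : Fin N → Bool → Fin N),
      ∀ (w : List Bool) (h : w.length = k),
        IsResetWord δ w ↔ SatCNF (fun j : Fin k => w.get (Fin.cast h.symm j)) φ := by
  let e := Fintype.equivFin (State n k)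
  exact ⟨_, fun s b => e (transition φ (e.symm s) b), fun w h =>
    (isResetWord_equiv_conj_iff e (transition φ) w).trans (isResetWord_transition_iff φ w h)⟩
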